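/- arXiv:2012.11048 — 3 statements merged into one kernel-verified Lean document; each statement's English description precedes it below -/
import Mathlib

section
/- For every real x > 1/2, the digamma function satisfies ψ(x) > log(x − 1/2). -/
/-!
The function `f y = ψ y - log (y - 1/2)` strictly decreases under `y ↦ y + 1`: by the
recurrence `ψ (y + 1) = ψ y + 1/y` this is the inequality `1/y < log ((y + 1/2) / (y - 1/2))`,
read off from the series of `log ((1 + u) / (1 - u))`. On the other hand, convexity of
`log ∘ Γ` gives `ψ y ≥ log (y - 1)`, so `f (y + n + 1) ≥ -1/(2(y + n)) → 0`.
Hence `f ≥ 0`, and `f x > f (x + 1) ≥ 0`.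
-/

/-- The digamma function: derivative of `log ∘ Γ` on the reals. -/
noncomputable def digamma (x : ℝ) : ℝ := deriv (fun y : ℝ => Real.log (Real.Gamma y)) x

open Real Filter

lemma differentiableAt_log_Gamma {x : ℝ} (hx : 0 < x) :
    DifferentiableAt ℝ (fun y => log (Gamma y)) x := by
  refine (differentiableAt_Gamma fun m hm => ?_).log (Gamma_pos_of_pos hx).ne'
  linarith [(Nat.cast_nonneg m : (0 : ℝ) ≤ m)]

lemma digamma_add_one {x : ℝ} (hx : 0 < x) : digamma (x + 1) = digamma x + x⁻¹ := by
  have hshift : (fun y => log (Gamma (y + 1))) =ᶠ[nhds x] fun y => log y + log (Gamma y) := by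
    filter_upwards [eventually_gt_nhds hx] with y hy
    rw [Gamma_add_one hy.ne', log_mul hy.ne' (Gamma_pos_of_pos hy).ne']
  calc digamma (x + 1) = deriv (fun y => log (Gamma (y + 1))) x :=
        (deriv_comp_add_const (f := fun y => log (Gamma y)) 1 x).symm
    _ = deriv (fun y => log y + log (Gamma y)) x := hshift.deriv_eq
    _ = digamma x + x⁻¹ := by
      rw [deriv_fun_add (differentiableAt_log hx.ne') (differentiableAt_log_Gamma hx),
        deriv_log, digamma, add_comm]

-- The slope of the convex function `log ∘ Γ` over `[y - 1, y]` is `log (y - 1)`.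
lemma log_sub_one_le_digamma {y : ℝ} (hy : 1 < y) : log (y - 1) ≤ digamma y := by
  have hy₁ : 0 < y - 1 := by linarith
  have hslope := convexOn_log_Gamma.slope_le_deriv (x := y - 1) (y := y) hy₁
    (show 0 < y by linarith) (by linarith) (differentiableAt_log_Gamma (by linarith))
  have hGamma : Gamma y = (y - 1) * Gamma (y - 1) := by
    simpa using Gamma_add_one hy₁.ne'
  rwa [slope_def_field, Function.comp_apply, Function.comp_apply, hGamma,
    log_mul hy₁.ne' (Gamma_pos_of_pos hy₁).ne', sub_sub_cancel, div_one, add_sub_cancel_right]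
    at hslope

lemma log_sub_half_sub_le_digamma {y : ℝ} (hy : 1 < y) :
    log (y - 1 / 2) - (2 * (y - 1))⁻¹ ≤ digamma y := by
  have hy₁ : 0 < y - 1 := by linarith
  have hlog : log (y - 1 / 2) - log (y - 1) ≤ (2 * (y - 1))⁻¹ := by
    calc log (y - 1 / 2) - log (y - 1) = log ((y - 1 / 2) / (y - 1)) :=
          (log_div (by linarith) hy₁.ne').symm
      _ ≤ (y - 1 / 2) / (y - 1) - 1 := log_le_sub_one_of_pos (div_pos (by linarith) hy₁)
      _ = (2 * (y - 1))⁻¹ := by field_simp; ring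
  linarith [log_sub_one_le_digamma hy]

-- `t⁻¹` and `(12 t³)⁻¹` are the first two terms of `hasSum_log_one_add_inv` at `a = t - 1/2`.
lemma inv_lt_log_add_half_sub_log_sub_half {t : ℝ} (ht : 1 / 2 < t) :
    t⁻¹ < log (t + 1 / 2) - log (t - 1 / 2) := by
  have ha : 0 < t - 1 / 2 := by linarith
  have hsum := hasSum_log_one_add_inv ha
  have hpartial := sum_le_hasSum (Finset.range 2) (fun k _ => by positivity) hsum
  have hlog : log (1 + (t - 1 / 2)⁻¹) = log (t + 1 / 2) - log (t - 1 / 2) := by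
    have hratio : 1 + (t - 1 / 2)⁻¹ = (t + 1 / 2) / (t - 1 / 2) := by
      rw [eq_div_iff ha.ne', add_mul, inv_mul_cancel₀ ha.ne']
      ring
    rw [hratio, log_div (by linarith) ha.ne']
  have hterms : ∑ k ∈ Finset.range 2,
      2 * (1 / (2 * (k : ℝ) + 1)) * (1 / (2 * (t - 1 / 2) + 1)) ^ (2 * k + 1) =
        t⁻¹ + (t ^ 3)⁻¹ / 12 := by
    simp only [one_div, inv_pow, Finset.sum_range_succ, Finset.range_one, Finset.sum_singleton,
      CharP.cast_eq_zero, mul_zero, zero_add, inv_one, mul_one, pow_one, Nat.cast_one,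
      Nat.reduceAdd]
    field_simp
    ring
  have hrest : 0 < (t ^ 3)⁻¹ / 12 := by positivity
  linarith

lemma digamma_sub_log_add_one_lt {y : ℝ} (hy : 1 / 2 < y) :
    digamma (y + 1) - log (y + 1 - 1 / 2) < digamma y - log (y - 1 / 2) := by
  rw [digamma_add_one (by linarith), add_sub_assoc y 1, show (1 : ℝ) - 1 / 2 = 1 / 2 by norm_num]
  linarith [inv_lt_log_add_half_sub_log_sub_half hy]

lemma digamma_add_nat_sub_log_le {y : ℝ} (hy : 1 / 2 < y) (n : ℕ) :
    digamma (y + n) - log (y + n - 1 / 2) ≤ digamma y - log (y - 1 / 2) := by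
  induction n with
  | zero => simp
  | succ n ih =>
    have hstep := digamma_sub_log_add_one_lt (y := y + n) (by linarith [n.cast_nonneg' (α := ℝ)])
    push_cast
    rw [← add_assoc]
    linarith

lemma log_sub_half_le_digamma {y : ℝ} (hy : 1 / 2 < y) : log (y - 1 / 2) ≤ digamma y := by
  have hbound (n : ℕ) : -(2 * (y + n))⁻¹ ≤ digamma y - log (y - 1 / 2) := by
    have hlower :=
      log_sub_half_sub_le_digamma (y := y + n + 1) (by linarith [n.cast_nonneg' (α := ℝ)])
    have hmono := digamma_add_nat_sub_log_le hy (n + 1)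
    rw [Nat.cast_succ, ← add_assoc] at hmono
    rw [add_sub_cancel_right] at hlower
    linarith
  have hlim : Tendsto (fun n : ℕ => -(2 * (y + n))⁻¹) atTop (nhds 0) := by
    have hgrow : Tendsto (fun n : ℕ => 2 * (y + n)) atTop atTop :=
      (tendsto_atTop_add_const_left _ y tendsto_natCast_atTop_atTop).const_mul_atTop two_pos
    simpa using hgrow.inv_tendsto_atTop.neg
  linarith [le_of_tendsto' hlim hbound]

/-- For every real `x > 1/2`, the digamma function satisfies `ψ(x) > log (x − 1/2)`. -/
theorem log_lt_digamma (x : ℝ) (hx : 1 / 2 < x) : Real.log (x - 1 / 2) < digamma x := by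
  have hstep := digamma_sub_log_add_one_lt hx
  have hnext := log_sub_half_le_digamma (y := x + 1) (by linarith)
  linarith
end

section
/- Let K ≥ 1, u : Fin K → ℝ, k : Fin K, and U ∈ ℝ, and suppose u k − u ℓ ≥ U for every ℓ ≠ k. Define q j = exp(u j) / ∑_{j'} exp(u j') for each j. Then for every j : Fin K, |q j − (1 if j = k else 0)| ≤ K · exp(−U). -/
/-!
The distance from the softmax `q` to the point mass at `k` is, in every coordinate, at most the
mass `1 - q k = ∑_{ℓ ≠ k} q ℓ` lying off `k`, and each `q ℓ` is at most
`exp (u ℓ - u k) ≤ exp (-U)` because the normalizer dominates `exp (u k)`.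
-/

open Finset Real

noncomputable def softmax {ι : Type*} [Fintype ι] (u : ι → ℝ) (j : ι) : ℝ :=
  exp (u j) / ∑ i, exp (u i)

section

variable {ι : Type*} [Fintype ι] (u : ι → ℝ)

lemma softmax_nonneg (j : ι) : 0 ≤ softmax u j := by
  unfold softmax
  positivity

lemma sum_softmax [Nonempty ι] : ∑ j, softmax u j = 1 := by
  simp only [softmax, ← sum_div]
  exact div_self (sum_pos (fun i _ => exp_pos (u i)) univ_nonempty).ne'

lemma softmax_le_exp_sub (i j : ι) : softmax u j ≤ exp (u j - u i) := by
  rw [exp_sub]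
  exact div_le_div_of_nonneg_left (exp_pos _).le (exp_pos _)
    (single_le_sum (fun i _ => (exp_pos (u i)).le) (mem_univ i))

variable [DecidableEq ι]

lemma one_sub_softmax_eq_sum_erase (k : ι) :
    1 - softmax u k = ∑ ℓ ∈ univ.erase k, softmax u ℓ := by
  have : Nonempty ι := ⟨k⟩
  rw [← sum_softmax u, ← add_sum_erase _ _ (mem_univ k)]
  ring

lemma abs_softmax_sub_indicator_le (k j : ι) :
    |softmax u j - if j = k then 1 else 0| ≤ 1 - softmax u k := by
  split_ifs with hjk
  · subst hjk
    rw [abs_sub_comm, abs_of_nonneg (by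
      rw [one_sub_softmax_eq_sum_erase]; exact sum_nonneg fun ℓ _ => softmax_nonneg u ℓ)]
  · rw [sub_zero, abs_of_nonneg (softmax_nonneg u j), one_sub_softmax_eq_sum_erase]
    exact single_le_sum (fun ℓ _ => softmax_nonneg u ℓ) (mem_erase.2 ⟨hjk, mem_univ j⟩)

lemma one_sub_softmax_le_of_gap (k : ι) (U : ℝ)
    (hgap : ∀ ℓ, ℓ ≠ k → U ≤ u k - u ℓ) :
    1 - softmax u k ≤ (Fintype.card ι - 1 : ℝ) * exp (-U) := by
  have : Nonempty ι := ⟨k⟩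
  rw [one_sub_softmax_eq_sum_erase]
  calc ∑ ℓ ∈ univ.erase k, softmax u ℓ ≤ ∑ _ℓ ∈ univ.erase k, exp (-U) :=
        sum_le_sum fun ℓ hℓ => (softmax_le_exp_sub u k ℓ).trans
          (exp_le_exp.2 (by linarith [hgap ℓ (ne_of_mem_erase hℓ)]))
    _ = (Fintype.card ι - 1 : ℝ) * exp (-U) := by
        rw [sum_const, card_erase_of_mem (mem_univ k), card_univ, nsmul_eq_mul,
          Nat.cast_pred Fintype.card_pos]

end

theorem softmax_close_to_indicator_general (K : ℕ) (u : Fin K → ℝ)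
    (k : Fin K) (U : ℝ) (hgap : ∀ ℓ, ℓ ≠ k → u k - u ℓ ≥ U) :
    ∀ j : Fin K,
      |Real.exp (u j) / (∑ j', Real.exp (u j')) - (if j = k then 1 else 0)|
        ≤ K * Real.exp (-U) := by
  intro j
  calc _ ≤ 1 - softmax u k := abs_softmax_sub_indicator_le u k j
    _ ≤ (Fintype.card (Fin K) - 1 : ℝ) * exp (-U) := one_sub_softmax_le_of_gap u k U hgap
    _ ≤ K * exp (-U) := by
        rw [Fintype.card_fin]
        exact mul_le_mul_of_nonneg_right (sub_le_self _ zero_le_one) (exp_pos _).le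

/-- If the log-score of `k` exceeds every other log-score by at least `U`, then
the softmax distribution `q` is within `K·exp(−U)` of the point mass at `k`,
coordinatewise. -/
theorem softmax_close_to_indicator (K : ℕ) (hK : 1 ≤ K) (u : Fin K → ℝ)
    (k : Fin K) (U : ℝ) (hgap : ∀ ℓ, ℓ ≠ k → u k - u ℓ ≥ U) :
    ∀ j : Fin K,
      |Real.exp (u j) / (∑ j', Real.exp (u j')) - (if j = k then 1 else 0)|
        ≤ K * Real.exp (-U) :=
  softmax_close_to_indicator_general K u k U hgap
end

section
/- Let K ≥ 2, let k and ℓ be distinct elements of Fin K, let M and C be disjoint finite sets of indices, let y assign to each index in M ∪ C an element of Fin K with y j = k for all j ∈ M and y j ≠ k for all j ∈ C, and let q assign to each index j ∈ M ∪ C and each i : Fin K a real q j i with 0 ≤ q j i ≤ 1 and |q j i − (1 if y j = i else 0)| ≤ ε, where ε ≥ 0. Then ∑_{j∈M}(q j k − q j ℓ) + ∑_{j∈C}(q j ℓ − q j k) ≥ |M|·(1 − 2ε) − 2|C|·ε + |{j ∈ C : y j = ℓ}|. -/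
open Finset

lemma sub_sub_two_mul_le_sub_of_abs_sub_le {x x' u u' ε : ℝ} (h : |x - u| ≤ ε)
    (h' : |x' - u'| ≤ ε) : u - u' - 2 * ε ≤ x - x' := by
  linarith [(abs_le.mp h).1, (abs_le.mp h').2]

theorem mustlink_cannotlink_bound_general {ι : Type*} [DecidableEq ι] (K : ℕ)
    (k ℓ : Fin K) (hkl : k ≠ ℓ) (M C : Finset ι)
    (y : ι → Fin K) (hyM : ∀ j ∈ M, y j = k) (hyC : ∀ j ∈ C, y j ≠ k)
    (q : ι → Fin K → ℝ) (ε : ℝ)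
    (hqerr : ∀ j ∈ M ∪ C, ∀ i : Fin K,
      |q j i - (if y j = i then 1 else 0)| ≤ ε) :
    ∑ j ∈ M, (q j k - q j ℓ) + ∑ j ∈ C, (q j ℓ - q j k)
      ≥ M.card * (1 - 2 * ε) - 2 * C.card * ε
        + (C.filter (fun j => y j = ℓ)).card := by
  have hgap {j} (hj : j ∈ M ∪ C) (i i' : Fin K) :
      (if y j = i then 1 else 0) - (if y j = i' then 1 else 0) - 2 * ε ≤ q j i - q j i' :=
    sub_sub_two_mul_le_sub_of_abs_sub_le (hqerr j hj i) (hqerr j hj i')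
  have hM : M.card • (1 - 2 * ε) ≤ ∑ j ∈ M, (q j k - q j ℓ) :=
    card_nsmul_le_sum _ _ _ fun j hj => by
      simpa [hyM j hj, hkl] using hgap (mem_union_left C hj) k ℓ
  have hC : ∑ j ∈ C, ((if y j = ℓ then 1 else 0) - 2 * ε) ≤ ∑ j ∈ C, (q j ℓ - q j k) :=
    sum_le_sum fun j hj => by simpa [hyC j hj] using hgap (mem_union_right M hj) ℓ k
  rw [sum_sub_distrib, sum_boole, sum_const, nsmul_eq_mul] at hC
  rw [nsmul_eq_mul] at hM
  linarith

/-- Key lower bound in the proof of Lemma 7: for must-link neighbors `M` (true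
label `k`) and cannot-link neighbors `C` (true label `≠ k`), with variational
probabilities `q` within `ε` of the true label indicators,
`∑_{j∈M}(q j k − q j ℓ) + ∑_{j∈C}(q j ℓ − q j k)
  ≥ |M|·(1 − 2ε) − 2|C|·ε + |{j ∈ C : y j = ℓ}|`. -/
theorem mustlink_cannotlink_bound {ι : Type*} [DecidableEq ι] (K : ℕ) (hK : 2 ≤ K)
    (k ℓ : Fin K) (hkl : k ≠ ℓ) (M C : Finset ι) (hMC : Disjoint M C)
    (y : ι → Fin K) (hyM : ∀ j ∈ M, y j = k) (hyC : ∀ j ∈ C, y j ≠ k)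
    (q : ι → Fin K → ℝ) (ε : ℝ) (hε : 0 ≤ ε)
    (hq01 : ∀ j ∈ M ∪ C, ∀ i : Fin K, 0 ≤ q j i ∧ q j i ≤ 1)
    (hqerr : ∀ j ∈ M ∪ C, ∀ i : Fin K,
      |q j i - (if y j = i then 1 else 0)| ≤ ε) :
    ∑ j ∈ M, (q j k - q j ℓ) + ∑ j ∈ C, (q j ℓ - q j k)
      ≥ M.card * (1 - 2 * ε) - 2 * C.card * ε
        + (C.filter (fun j => y j = ℓ)).card :=
  mustlink_cannotlink_bound_general K k ℓ hkl M C y hyM hyC q ε hqerr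
end
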